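/- Let I₁ denote the modified Bessel function of the first kind of order one, I₁(x) = Σ_{m=0}^∞ (x/2)^{2m+1} / (m!·(m+1)!). Then for every b ∈ (0,1) and every x > 0: I₁(bx)² + I₁(x)² − (b + 1/b)·I₁(bx)·I₁(x) > 0. -/

import Mathlib

/-!
The series of `I₁` has only odd powers, so `I₁(bx) = Σ b^{2m+1} aₘ x^{2m+1}` with `aₘ > 0`; for
`0 < b < 1` this gives `I₁(bx) < b I₁(x)`, hence also `b I₁(bx) < I₁(x)`. The claim then follows from
`b (A² + B² − (b + 1/b) A B) = (bB − A)(B − bA)` with `A = I₁(bx)`, `B = I₁(x)`.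
-/

open Real

noncomputable section

namespace DCV19

/-- The modified Bessel function of the first kind of order one,
`I₁(x) = Σ_{m=0}^∞ (x/2)^{2m+1}/(m!·(m+1)!)`. -/
def besselI1 (x : ℝ) : ℝ :=
  ∑' m : ℕ, (x/2)^(2*m+1) / ((m.factorial : ℝ) * ((m+1).factorial : ℝ))

def besselI1Term (x : ℝ) (m : ℕ) : ℝ :=
  (x/2)^(2*m+1) / ((m.factorial : ℝ) * ((m+1).factorial : ℝ))

lemma besselI1_eq_tsum (x : ℝ) : besselI1 x = ∑' m, besselI1Term x m := rfl

lemma besselI1Term_pos {x : ℝ} (hx : 0 < x) (m : ℕ) : 0 < besselI1Term x m := by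
  unfold besselI1Term
  positivity

lemma besselI1Term_mul (b x : ℝ) (m : ℕ) :
    besselI1Term (b * x) m = b^(2*m+1) * besselI1Term x m := by
  simp only [besselI1Term]
  ring

lemma summable_besselI1Term (x : ℝ) : Summable (besselI1Term x) := by
  refine ((Real.summable_pow_div_factorial ((x/2)^2)).mul_left |x/2|).of_norm_bounded fun m => ?_
  have hfac : (m.factorial : ℝ) ≤ m.factorial * (m+1).factorial :=
    le_mul_of_one_le_right (by positivity) (by exact_mod_cast (m+1).factorial_pos)
  calc ‖besselI1Term x m‖ = |x/2| * ((x/2)^2)^m / (m.factorial * (m+1).factorial) := by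
        rw [besselI1Term, Real.norm_eq_abs, abs_div, abs_pow,
          abs_of_pos (a := (m.factorial : ℝ) * (m+1).factorial) (by positivity),
          pow_succ, pow_mul, sq_abs, mul_comm]
    _ ≤ |x/2| * (((x/2)^2)^m / m.factorial) := by
        rw [← mul_div_assoc]
        gcongr

lemma besselI1_pos {x : ℝ} (hx : 0 < x) : 0 < besselI1 x :=
  (summable_besselI1Term x).tsum_pos (fun m => (besselI1Term_pos hx m).le) 0 (besselI1Term_pos hx 0)

lemma besselI1_mul_lt_mul {b x : ℝ} (hb₀ : 0 < b) (hb₁ : b < 1) (hx : 0 < x) :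
    besselI1 (b * x) < b * besselI1 x := by
  rw [besselI1_eq_tsum, besselI1_eq_tsum, ← tsum_mul_left]
  refine (summable_besselI1Term _).tsum_lt_tsum (i := 1) (fun m => ?_) ?_
    ((summable_besselI1Term x).mul_left b)
  · rw [besselI1Term_mul]
    gcongr
    · exact (besselI1Term_pos hx m).le
    · exact pow_le_of_le_one hb₀.le hb₁.le (Nat.succ_ne_zero _)
  · rw [besselI1Term_mul]
    gcongr
    · exact besselI1Term_pos hx 1
    · exact pow_lt_self_of_lt_one₀ hb₀ hb₁ (by norm_num)

lemma sq_add_sq_sub_mul_pos {a c b : ℝ} (hb : 0 < b) (hac : a < b * c) (hca : b * a < c) :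
    0 < a^2 + c^2 - (b + 1/b) * a * c := by
  have hfactor : a^2 + c^2 - (b + 1/b) * a * c = (b * c - a) * (c - b * a) / b := by
    field_simp
    ring
  rw [hfactor]
  exact div_pos (mul_pos (by linarith) (by linarith)) hb

/-- For every `b ∈ (0,1)` and `x > 0`:
`I₁(bx)² + I₁(x)² − (b+1/b)·I₁(bx)·I₁(x) > 0`. -/
theorem besselI1_inequality (b : ℝ) (hb : b ∈ Set.Ioo (0:ℝ) 1) (x : ℝ) (hx : 0 < x) :
    0 < besselI1 (b*x)^2 + besselI1 x^2 - (b + 1/b) * besselI1 (b*x) * besselI1 x := by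
  obtain ⟨hb₀, hb₁⟩ := hb
  have hlt : besselI1 (b * x) < b * besselI1 x := besselI1_mul_lt_mul hb₀ hb₁ hx
  have hlt' : b * besselI1 (b * x) < besselI1 x :=
    calc b * besselI1 (b * x) < besselI1 (b * x) :=
          mul_lt_of_lt_one_left (besselI1_pos (mul_pos hb₀ hx)) hb₁
      _ < b * besselI1 x := hlt
      _ < besselI1 x := mul_lt_of_lt_one_left (besselI1_pos hx) hb₁
  exact sq_add_sq_sub_mul_pos hb₀ hlt hlt'

end DCV19
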